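/- Let H be a real Hilbert space, write ⟨x⟩ := (1 + x²)^{1/2}, and let 0 < α₁ < α < α₂ satisfy 2α₁ ≤ α₂ − α. Then there is a constant C > 0, depending only on α₁, α, α₂, with the following property: for all continuously differentiable v, w : ℝ → H with ‖e^{−α₁⟨·⟩} v'‖_{L²(ℝ,H)} < ∞, ‖e^{−α⟨·⟩} w‖_{L²(ℝ,H)} < ∞, and ‖e^{−α₂⟨·⟩} w'‖_{L²(ℝ,H)} < ∞, one has ∫_ℝ e^{−2α₂⟨x⟩} ‖w(x)‖² ‖v'(x)‖² dx ≤ C ‖e^{−α₁⟨·⟩} v'‖²_{L²(ℝ,H)} · ( ‖e^{−α⟨·⟩} w‖_{L²(ℝ,H)} + ‖e^{−α₂⟨·⟩} w'‖_{L²(ℝ,H)} )². -/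

import Mathlib

open MeasureTheory

set_option synthInstance.maxHeartbeats 400000
set_option maxHeartbeats 1000000

/-- The Japanese bracket `⟨x⟩ = (1 + x²)^{1/2}`. -/
noncomputable def jbracket (x : ℝ) : ℝ := Real.sqrt (1 + x ^ 2)

/-
The weight splits as `e^{-2α₂⟨x⟩} = e^{-2β⟨x⟩} e^{-2α₁⟨x⟩}` with `β = α₂ - α₁`, so it suffices to
bound `h = e^{-2β⟨·⟩} ‖w‖²` uniformly. Since `h` and `h'` are integrable on `ℝ`, `h` vanishes at
`+∞` and `h(x) = -∫_x^∞ h'`, whence `sup h ≤ ∫ |h'|`. In `h'`, the term coming from the weight is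
at most `2β h` because `|⟨x⟩'| ≤ 1`, and the cross term `2 e^{-2β⟨x⟩} ⟪w, w'⟫` is at most
`e^{-2α⟨x⟩}‖w‖² + e^{-2α₂⟨x⟩}‖w'‖²` by AM-GM, because `2α₁ ≤ α₂ - α` means exactly
`e^{-2β⟨x⟩} ≤ e^{-α⟨x⟩} e^{-α₂⟨x⟩}`.
-/

open Real

theorem norm_le_integral_norm_of_hasDerivAt {E : Type*} [NormedAddCommGroup E] [NormedSpace ℝ E]
    [CompleteSpace E] {f f' : ℝ → E} (hd : ∀ x, HasDerivAt f (f' x) x) (hf : Integrable f)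
    (hf' : Integrable f') (x : ℝ) : ‖f x‖ ≤ ∫ y, ‖f' y‖ := by
  have hlim : Filter.Tendsto f Filter.atTop (nhds 0) :=
    tendsto_zero_of_hasDerivAt_of_integrableOn_Ioi (a := x) (fun y _ => hd y)
      hf'.integrableOn hf.integrableOn
  have hftc : ∫ y in Set.Ioi x, f' y = 0 - f x :=
    integral_Ioi_of_hasDerivAt_of_tendsto' (fun y _ => hd y) hf'.integrableOn hlim
  calc ‖f x‖ = ‖∫ y in Set.Ioi x, f' y‖ := by rw [hftc, zero_sub, norm_neg]
    _ ≤ ∫ y in Set.Ioi x, ‖f' y‖ := norm_integral_le_integral_norm _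
    _ ≤ ∫ y, ‖f' y‖ := setIntegral_le_integral hf'.norm (ae_of_all _ fun y => norm_nonneg _)

lemma jbracket_nonneg (x : ℝ) : 0 ≤ jbracket x :=
  sqrt_nonneg _

lemma abs_le_jbracket (x : ℝ) : |x| ≤ jbracket x :=
  abs_le_sqrt (by linarith)

lemma abs_div_jbracket_le_one (x : ℝ) : |x / jbracket x| ≤ 1 := by
  rw [abs_div, abs_of_nonneg (jbracket_nonneg x)]
  exact div_le_one_of_le₀ (abs_le_jbracket x) (jbracket_nonneg x)

lemma hasDerivAt_jbracket (x : ℝ) : HasDerivAt jbracket (x / jbracket x) x := by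
  refine (((hasDerivAt_pow 2 x).const_add 1).sqrt (by positivity)).congr_deriv ?_
  norm_num [jbracket]
  ring

section WeightedNormSq

variable {H : Type*} [NormedAddCommGroup H]

/-- `∫ weightedNormSq c f = ‖e^{-c⟨·⟩} f‖²_{L²}`. -/
noncomputable def weightedNormSq (c : ℝ) (f : ℝ → H) (x : ℝ) : ℝ :=
  exp (-(2 * c) * jbracket x) * ‖f x‖ ^ 2

lemma weightedNormSq_nonneg (c : ℝ) (f : ℝ → H) (x : ℝ) : 0 ≤ weightedNormSq c f x := by
  unfold weightedNormSq; positivity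

lemma weightedNormSq_le_of_le {a c : ℝ} (hac : a ≤ c) (f : ℝ → H) (x : ℝ) :
    weightedNormSq c f x ≤ weightedNormSq a f x :=
  mul_le_mul_of_nonneg_right (exp_le_exp.2 (by nlinarith [jbracket_nonneg x])) (by positivity)

lemma weightedNormSq_mul_weightedNormSq (a b : ℝ) (f g : ℝ → H) (x : ℝ) :
    weightedNormSq a f x * weightedNormSq b g x = weightedNormSq (a + b) f x * ‖g x‖ ^ 2 := by
  simp only [weightedNormSq]
  rw [show -(2 * (a + b)) * jbracket x = -(2 * a) * jbracket x + -(2 * b) * jbracket x by ring,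
    exp_add]
  ring

variable [InnerProductSpace ℝ H]

lemma hasDerivAt_weightedNormSq (c : ℝ) {w : ℝ → H} {w' : H} {x : ℝ} (hw : HasDerivAt w w' x) :
    HasDerivAt (weightedNormSq c w)
      (-(2 * c) * (x / jbracket x) * weightedNormSq c w x +
        exp (-(2 * c) * jbracket x) * (2 * inner ℝ (w x) w')) x := by
  refine (((hasDerivAt_jbracket x).const_mul (-(2 * c))).exp.mul hw.norm_sq).congr_deriv ?_
  rw [weightedNormSq]
  ring

lemma abs_exp_mul_two_mul_inner_le {a b c : ℝ} (habc : a + b ≤ 2 * c) {t : ℝ} (ht : 0 ≤ t)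
    (y z : H) :
    |exp (-(2 * c) * t) * (2 * inner ℝ y z)| ≤
      exp (-(2 * a) * t) * ‖y‖ ^ 2 + exp (-(2 * b) * t) * ‖z‖ ^ 2 := by
  have hsplit : exp (-(2 * c) * t) ≤ exp (-a * t) * exp (-b * t) := by
    rw [← exp_add]; exact exp_le_exp.2 (by nlinarith)
  have hsq : ∀ d : ℝ, exp (-(2 * d) * t) = exp (-d * t) ^ 2 := fun d => by
    rw [← exp_nat_mul]; ring_nf
  calc |exp (-(2 * c) * t) * (2 * inner ℝ y z)|
      ≤ exp (-a * t) * exp (-b * t) * (2 * (‖y‖ * ‖z‖)) := by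
        rw [abs_mul, abs_of_pos (exp_pos _), abs_mul, abs_two]
        gcongr
        exact abs_real_inner_le_norm y z
    _ = 2 * (exp (-a * t) * ‖y‖) * (exp (-b * t) * ‖z‖) := by ring
    _ ≤ (exp (-a * t) * ‖y‖) ^ 2 + (exp (-b * t) * ‖z‖) ^ 2 := two_mul_le_add_sq _ _
    _ = _ := by rw [hsq, hsq]; ring

lemma abs_deriv_weightedNormSq_le {a b c : ℝ} (hc : 0 ≤ c) (habc : a + b ≤ 2 * c)
    {w : ℝ → H} {w' : H} {x : ℝ} (hw : HasDerivAt w w' x) :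
    |deriv (weightedNormSq c w) x| ≤
      2 * c * weightedNormSq c w x + weightedNormSq a w x +
        exp (-(2 * b) * jbracket x) * ‖w'‖ ^ 2 := by
  have hweight : |-(2 * c) * (x / jbracket x) * weightedNormSq c w x| ≤
      2 * c * weightedNormSq c w x := by
    rw [abs_mul, abs_mul, abs_of_nonneg (weightedNormSq_nonneg c w x), abs_neg,
      abs_of_nonneg (by positivity : 0 ≤ 2 * c)]
    exact mul_le_mul_of_nonneg_right
      (mul_le_of_le_one_right (by positivity) (abs_div_jbracket_le_one x))
      (weightedNormSq_nonneg c w x)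
  have hcross := abs_exp_mul_two_mul_inner_le habc (jbracket_nonneg x) (w x) w'
  rw [(hasDerivAt_weightedNormSq c hw).deriv]
  calc _ ≤ _ := abs_add_le _ _
    _ ≤ _ := add_le_add hweight hcross
    _ = _ := by unfold weightedNormSq; ring

theorem weightedNormSq_le_integral_add_integral_deriv {a b c : ℝ} (hc : 0 ≤ c) (hac : a ≤ c)
    (habc : a + b ≤ 2 * c) {w : ℝ → H} (hw : Differentiable ℝ w)
    (hwa : Integrable (weightedNormSq a w)) (hwb : Integrable (weightedNormSq b (deriv w)))
    (x : ℝ) :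
    weightedNormSq c w x ≤
      (1 + 2 * c) * (∫ y, weightedNormSq a w y) + ∫ y, weightedNormSq b (deriv w) y := by
  have hd : Differentiable ℝ (weightedNormSq c w) := fun y =>
    (hasDerivAt_weightedNormSq c (hw y).hasDerivAt).differentiableAt
  have hbound : ∀ y, |deriv (weightedNormSq c w) y| ≤
      2 * c * weightedNormSq c w y + weightedNormSq a w y + weightedNormSq b (deriv w) y :=
    fun y => abs_deriv_weightedNormSq_le hc habc (hw y).hasDerivAt
  have hint : Integrable (weightedNormSq c w) :=
    hwa.mono' hd.continuous.aestronglyMeasurable (ae_of_all _ fun y =>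
      (norm_of_nonneg (weightedNormSq_nonneg c w y)).trans_le (weightedNormSq_le_of_le hac w y))
  have hdom : Integrable fun y => 2 * c * weightedNormSq c w y + weightedNormSq a w y +
      weightedNormSq b (deriv w) y := ((hint.const_mul _).add hwa).add hwb
  have hint' : Integrable (deriv (weightedNormSq c w)) :=
    hdom.mono' (measurable_deriv _).aestronglyMeasurable (ae_of_all _ hbound)
  calc weightedNormSq c w x = ‖weightedNormSq c w x‖ :=
        (norm_of_nonneg (weightedNormSq_nonneg c w x)).symm
    _ ≤ ∫ y, ‖deriv (weightedNormSq c w) y‖ :=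
        norm_le_integral_norm_of_hasDerivAt (fun y => (hd y).hasDerivAt) hint hint' x
    _ ≤ ∫ y, (2 * c * weightedNormSq c w y + weightedNormSq a w y +
          weightedNormSq b (deriv w) y) :=
        integral_mono hint'.norm hdom hbound
    _ = 2 * c * (∫ y, weightedNormSq c w y) + (∫ y, weightedNormSq a w y) +
          ∫ y, weightedNormSq b (deriv w) y := by
        rw [integral_add _ hwb, integral_add _ hwa, integral_const_mul]
        · exact hint.const_mul _
        · exact (hint.const_mul _).add hwa
    _ ≤ 2 * c * (∫ y, weightedNormSq a w y) + (∫ y, weightedNormSq a w y) +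
          ∫ y, weightedNormSq b (deriv w) y := by
        gcongr 2 * c * ?_ + _ + _
        exact integral_mono hint hwa (weightedNormSq_le_of_le hac w)
    _ = _ := by ring

end WeightedNormSq

theorem mixed_norm_key_estimate_general
    {H : Type*} [NormedAddCommGroup H] [InnerProductSpace ℝ H]
    (α₁ α α₂ : ℝ) (hα₁ : 0 < α₁) (h₁₂ : α₁ < α)
    (hsep : 2 * α₁ ≤ α₂ - α) :
    ∃ C : ℝ, 0 < C ∧
      ∀ v w : ℝ → H, ContDiff ℝ 1 v → ContDiff ℝ 1 w →
        Integrable (fun x : ℝ => Real.exp (-(2 * α₁) * jbracket x) * ‖deriv v x‖ ^ 2) →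
        Integrable (fun x : ℝ => Real.exp (-(2 * α) * jbracket x) * ‖w x‖ ^ 2) →
        Integrable (fun x : ℝ => Real.exp (-(2 * α₂) * jbracket x) * ‖deriv w x‖ ^ 2) →
        ∫ x : ℝ, Real.exp (-(2 * α₂) * jbracket x) * ‖w x‖ ^ 2 * ‖deriv v x‖ ^ 2 ≤
          C * (∫ x : ℝ, Real.exp (-(2 * α₁) * jbracket x) * ‖deriv v x‖ ^ 2) *
            (Real.sqrt (∫ x : ℝ, Real.exp (-(2 * α) * jbracket x) * ‖w x‖ ^ 2) +
              Real.sqrt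
                (∫ x : ℝ, Real.exp (-(2 * α₂) * jbracket x) * ‖deriv w x‖ ^ 2)) ^ 2 := by
  have hβ : 0 ≤ α₂ - α₁ := by linarith
  refine ⟨1 + 2 * (α₂ - α₁), by linarith, fun v w _ hw hv' hwα hw' => ?_⟩
  set A := ∫ x, weightedNormSq α w x
  set B := ∫ x, weightedNormSq α₂ (deriv w) x
  set S := (1 + 2 * (α₂ - α₁)) * A + B
  have hsup : ∀ x, weightedNormSq (α₂ - α₁) w x ≤ S :=
    weightedNormSq_le_integral_add_integral_deriv hβ (by linarith) (by linarith)
      (hw.differentiable one_ne_zero) hwα hw'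
  have hsplit : ∀ x, exp (-(2 * α₂) * jbracket x) * ‖w x‖ ^ 2 * ‖deriv v x‖ ^ 2 =
      weightedNormSq (α₂ - α₁) w x * weightedNormSq α₁ (deriv v) x := fun x => by
    rw [weightedNormSq_mul_weightedNormSq, sub_add_cancel]
    rfl
  have hS : S ≤ (1 + 2 * (α₂ - α₁)) * (sqrt A + sqrt B) ^ 2 := by
    have hA : sqrt A ^ 2 = A := sq_sqrt (integral_nonneg (weightedNormSq_nonneg α w))
    have hB : sqrt B ^ 2 = B := sq_sqrt (integral_nonneg (weightedNormSq_nonneg α₂ (deriv w)))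
    have hAB := mul_nonneg (sqrt_nonneg A) (sqrt_nonneg B)
    nlinarith [mul_nonneg hβ hAB, mul_nonneg hβ (sq_nonneg (sqrt B))]
  calc ∫ x, exp (-(2 * α₂) * jbracket x) * ‖w x‖ ^ 2 * ‖deriv v x‖ ^ 2
      ≤ ∫ x, S * weightedNormSq α₁ (deriv v) x :=
        integral_mono_of_nonneg (ae_of_all _ fun x => by positivity) (hv'.const_mul S)
          (ae_of_all _ fun x => (hsplit x).trans_le
            (mul_le_mul_of_nonneg_right (hsup x) (weightedNormSq_nonneg _ _ x)))
    _ = S * ∫ x, weightedNormSq α₁ (deriv v) x := integral_const_mul S _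
    _ ≤ _ := by
      rw [mul_right_comm]
      exact mul_le_mul_of_nonneg_right hS (integral_nonneg (weightedNormSq_nonneg _ _))

/-- **The key mixed-norm estimate (obs) for the center manifold construction.**
For `0 < α₁ < α < α₂` with `2α₁ ≤ α₂ − α`, there is `C > 0` depending only on the
weights such that
`∫ e^{−2α₂⟨x⟩}‖w(x)‖²‖v'(x)‖² dx ≤ C ‖e^{−α₁⟨·⟩}v'‖²_{L²}
  (‖e^{−α⟨·⟩}w‖_{L²} + ‖e^{−α₂⟨·⟩}w'‖_{L²})²`. -/
theorem mixed_norm_key_estimate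
    {H : Type*} [NormedAddCommGroup H] [InnerProductSpace ℝ H]
    (α₁ α α₂ : ℝ) (hα₁ : 0 < α₁) (h₁₂ : α₁ < α) (h₂₃ : α < α₂)
    (hsep : 2 * α₁ ≤ α₂ - α) :
    ∃ C : ℝ, 0 < C ∧
      ∀ v w : ℝ → H, ContDiff ℝ 1 v → ContDiff ℝ 1 w →
        Integrable (fun x : ℝ => Real.exp (-(2 * α₁) * jbracket x) * ‖deriv v x‖ ^ 2) →
        Integrable (fun x : ℝ => Real.exp (-(2 * α) * jbracket x) * ‖w x‖ ^ 2) →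
        Integrable (fun x : ℝ => Real.exp (-(2 * α₂) * jbracket x) * ‖deriv w x‖ ^ 2) →
        ∫ x : ℝ, Real.exp (-(2 * α₂) * jbracket x) * ‖w x‖ ^ 2 * ‖deriv v x‖ ^ 2 ≤
          C * (∫ x : ℝ, Real.exp (-(2 * α₁) * jbracket x) * ‖deriv v x‖ ^ 2) *
            (Real.sqrt (∫ x : ℝ, Real.exp (-(2 * α) * jbracket x) * ‖w x‖ ^ 2) +
              Real.sqrt
                (∫ x : ℝ, Real.exp (-(2 * α₂) * jbracket x) * ‖deriv w x‖ ^ 2)) ^ 2 :=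
  mixed_norm_key_estimate_general α₁ α α₂ hα₁ h₁₂ hsep
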